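/- Let f_0 ⋖ f_1 ⋖ ⋯ ⋖ f_t be a chain in Bound(k,n). Then t = ℓ(f_t) − ℓ(f_0), Cr(f_0) − Cr(f_t) = (ℓ(f_t) − ℓ(f_0)) − (#Fix(f_t) − #Fix(f_0)), and the number of indices 0 ≤ s < t with Cr(f_s) = Cr(f_{s+1}) equals #Fix(f_t) − #Fix(f_0). -/

import Mathlib

/-- A `k`-bounded affine permutation of size `n`: a bijection `f : ℤ → ℤ` with
`f(i+n) = f(i) + n`, `i ≤ f(i) ≤ i + n` for all `i`, and `∑_{i=1}^n (f(i) - i) = n*k`. -/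
structure BoundedAffinePerm (k n : ℕ) where
  toFun : ℤ → ℤ
  bijective : Function.Bijective toFun
  periodic : ∀ i : ℤ, toFun (i + (n : ℤ)) = toFun i + (n : ℤ)
  le_apply : ∀ i : ℤ, i ≤ toFun i
  apply_le : ∀ i : ℤ, toFun i ≤ i + (n : ℤ)
  sum_eq : (∑ i ∈ Finset.Icc (1 : ℤ) (n : ℤ), (toFun i - i)) = (n : ℤ) * (k : ℤ)

namespace BoundedAffinePerm

variable {k n : ℕ}

/-- The length of a bounded affine permutation: the number of pairs `(i,j)` with
`1 ≤ i < j ≤ n` and either `f(i) > f(j)` or `f(i) < f(j) - n` (affine inversions). -/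
noncomputable def length (f : BoundedAffinePerm k n) : ℕ :=
  ((Finset.Icc (1 : ℤ) (n : ℤ) ×ˢ Finset.Icc (1 : ℤ) (n : ℤ)).filter
    (fun p => p.1 < p.2 ∧
      (f.toFun p.2 < f.toFun p.1 ∨ f.toFun p.1 < f.toFun p.2 - (n : ℤ)))).card

/-- The number of fixed points of `f` in `{1, …, n}`. -/
noncomputable def fixCount (f : BoundedAffinePerm k n) : ℕ :=
  ((Finset.Icc (1 : ℤ) (n : ℤ)).filter (fun i => f.toFun i = i)).card

/-- The crossing number of `f`: the number of pairs `(i,j) ∈ {1,…,n} × ℤ` with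
`i < j`, `j < f(i)` and `f(i) < f(j)`. -/
noncomputable def crossings (f : BoundedAffinePerm k n) : ℕ :=
  ∑ i ∈ Finset.Icc (1 : ℤ) (n : ℤ),
    ((Finset.Ioo i (f.toFun i)).filter (fun j => f.toFun i < f.toFun j)).card

end BoundedAffinePerm

/-- The transposition `σ_i` of size `n`. -/
def sigmaT (n : ℕ) (i : ℤ) : ℤ → ℤ := fun m =>
  if m % (n : ℤ) = i % (n : ℤ) then m + 1
  else if m % (n : ℤ) = (i + 1) % (n : ℤ) then m - 1
  else m

/-- The covering relation `f ⋖ g` on `Bound(k,n)`: `ℓ(g) > ℓ(f)` and `g = σ_i ∘ f`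
or `g = f ∘ σ_i` for some transposition `σ_i` of size `n`. -/
def BoundedAffinePerm.Covers {k n : ℕ} (f g : BoundedAffinePerm k n) : Prop :=
  f.length < g.length ∧
    ∃ i : ℤ, g.toFun = sigmaT n i ∘ f.toFun ∨ g.toFun = f.toFun ∘ sigmaT n i

/-!
Length, crossing number and number of fixed points are each the sum, over one period, of an
`n`-periodic local count (`inversionsAt`, `crossingsAt`, `fixedAt`). Multiplying by `σ_a` on
either side changes these local counts at only two positions `u < v` of a suitable period. When
the move goes up, the inversions there grow by exactly one, and either `g v = v` is a new fixed
point and no crossing changes, or no fixed point appears and exactly one crossing is lost.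
When the move goes down, the same applies to the reverse move, so the length drops by one,
which a covering step forbids. Adding up these step identities along the chain (three
telescoping sums) gives the theorem.
-/

open Finset Function

namespace Int

lemma eq_of_modEq_of_lt_of_lt {n a b : ℤ} (h : a ≡ b [ZMOD n]) (h₁ : b - n < a)
    (h₂ : a < b + n) : a = b := by
  have := Int.eq_zero_of_abs_lt_dvd h.dvd (abs_sub_lt_iff.mpr ⟨by omega, by omega⟩)
  omega

lemma not_modEq_of_lt_of_lt {n a b : ℤ} (h₁ : b < a) (h₂ : a < b + n) : ¬ a ≡ b [ZMOD n] :=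
  fun h => by have := eq_of_modEq_of_lt_of_lt h (by omega) h₂; omega

lemma eq_or_eq_add_of_modEq {n a b : ℤ} (h : a ≡ b [ZMOD n]) (h₁ : b - n < a)
    (h₂ : a < b + 2 * n) : a = b ∨ a = b + n := by
  rcases lt_or_ge a (b + n) with ha | ha
  · exact .inl (eq_of_modEq_of_lt_of_lt h h₁ ha)
  · exact .inr (eq_of_modEq_of_lt_of_lt (h.trans Int.add_modEq_right.symm) (by omega) (by omega))

end Int

section Transposition

variable {n : ℕ} {i m : ℤ}

lemma add_one_not_modEq_self (hn : 2 ≤ n) (i : ℤ) : ¬ i + 1 ≡ i [ZMOD n] :=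
  Int.not_modEq_of_lt_of_lt (by omega) (by omega)

lemma sigmaT_of_modEq (h : m ≡ i [ZMOD n]) : sigmaT n i m = m + 1 := if_pos h

lemma sigmaT_of_modEq_add_one (hn : 2 ≤ n) (h : m ≡ i + 1 [ZMOD n]) :
    sigmaT n i m = m - 1 := by
  have : ¬ m ≡ i [ZMOD n] := fun h' => add_one_not_modEq_self hn i (h.symm.trans h')
  exact (if_neg this).trans (if_pos h)

lemma sigmaT_of_not_modEq (h₁ : ¬ m ≡ i [ZMOD n]) (h₂ : ¬ m ≡ i + 1 [ZMOD n]) :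
    sigmaT n i m = m :=
  (if_neg h₁).trans (if_neg h₂)

lemma sigmaT_sigmaT (hn : 2 ≤ n) (i m : ℤ) : sigmaT n i (sigmaT n i m) = m := by
  by_cases h₁ : m ≡ i [ZMOD n]
  · rw [sigmaT_of_modEq h₁, sigmaT_of_modEq_add_one hn (h₁.add_right 1), add_sub_cancel_right]
  by_cases h₂ : m ≡ i + 1 [ZMOD n]
  · have : m - 1 ≡ i [ZMOD n] := by simpa using h₂.sub_right 1
    rw [sigmaT_of_modEq_add_one hn h₂, sigmaT_of_modEq this, sub_add_cancel]
  · rw [sigmaT_of_not_modEq h₁ h₂, sigmaT_of_not_modEq h₁ h₂]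

lemma sigmaT_eq_swap (hn : 2 ≤ n) {b : ℤ} (hb : b ≡ i [ZMOD n]) (h₁ : b + 1 - n < m)
    (h₂ : m < b + n) : sigmaT n i m = Equiv.swap b (b + 1) m := by
  by_cases hm : m = b
  · subst hm; rw [sigmaT_of_modEq hb, Equiv.swap_apply_left]
  by_cases hm' : m = b + 1
  · subst hm'
    rw [sigmaT_of_modEq_add_one hn (hb.add_right 1), Equiv.swap_apply_right, add_sub_cancel_right]
  rw [Equiv.swap_apply_of_ne_of_ne hm hm', sigmaT_of_not_modEq]
  · exact fun h => hm (Int.eq_of_modEq_of_lt_of_lt (h.trans hb.symm) (by omega) h₂)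
  · exact fun h => hm' (Int.eq_of_modEq_of_lt_of_lt (h.trans (hb.add_right 1).symm)
      (by omega) (by omega))

end Transposition

lemma sum_Icc_eq_of_periodic {M : Type*} [AddCommMonoid M] {n : ℕ} {φ : ℤ → M}
    (hφ : Periodic φ n) (m : ℤ) :
    ∑ p ∈ Icc m (m + n - 1), φ p = ∑ p ∈ Icc (1 : ℤ) n, φ p := by
  set S : ℤ → M := fun m => ∑ p ∈ Icc m (m + n - 1), φ p
  have hS : Periodic S 1 := by
    intro m
    rcases Nat.eq_zero_or_pos n with rfl | hn
    · simp [S]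
    have h₁ := sum_erase_add (Icc (m + 1) (m + 1 + n - 1)) φ (a := m + n)
      (by rw [mem_Icc]; omega)
    have h₂ := sum_erase_add (Icc m (m + n - 1)) φ (a := m) (by rw [mem_Icc]; omega)
    have e : (Icc (m + 1) (m + 1 + n - 1)).erase (m + n) = (Icc m (m + n - 1)).erase m := by
      ext q; simp only [mem_erase, mem_Icc]; omega
    simp only [S, ← h₁, ← h₂, e, hφ m]
  have : S m = S 1 := by simpa using (hS.int_mul_eq m).trans (hS.int_mul_eq 1).symm
  simpa [S] using this

lemma sum_Icc_add_eq_of_eqOn_window {M : Type*} [AddCommMonoid M] {n : ℕ} {φ ψ : ℤ → M}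
    (hφ : Periodic φ n) (hψ : Periodic ψ n) {u v : ℤ} (huv : u < v) (hvu : v < u + n)
    (h : ∀ p, u < p → p < u + n → p ≠ v → φ p = ψ p) :
    ∑ p ∈ Icc (1 : ℤ) n, φ p + (ψ u + ψ v) = ∑ p ∈ Icc (1 : ℤ) n, ψ p + (φ u + φ v) := by
  rw [← sum_Icc_eq_of_periodic hφ u, ← sum_Icc_eq_of_periodic hψ u]
  set W := Icc u (u + n - 1)
  have hu : u ∈ W := by rw [mem_Icc]; omega
  have hv : v ∈ W.erase u := by rw [mem_erase, mem_Icc]; omega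
  have rest : ∑ p ∈ (W.erase u).erase v, φ p = ∑ p ∈ (W.erase u).erase v, ψ p := by
    refine sum_congr rfl fun p hp => ?_
    simp only [W, mem_erase, mem_Icc] at hp
    exact h p (by omega) (by omega) hp.1
  rw [← add_sum_erase W φ hu, ← add_sum_erase _ φ hv, ← add_sum_erase W ψ hu,
    ← add_sum_erase _ ψ hv, rest]
  abel

lemma card_filter_swap {α : Type*} [DecidableEq α] {s : Finset α} {u v : α} (hs : u ∈ s ↔ v ∈ s)
    (P : α → Prop) [DecidablePred P] : #{q ∈ s | P (Equiv.swap u v q)} = #{q ∈ s | P q} := by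
  refine card_equiv (Equiv.swap u v) fun q => ?_
  simp only [mem_filter, and_congr_left_iff]
  intro _
  rcases eq_or_ne q u with rfl | hu
  · simp [hs]
  rcases eq_or_ne q v with rfl | hv
  · simp [hs]
  rw [Equiv.swap_apply_of_ne_of_ne hu hv]

namespace BoundedAffinePerm

variable {k n : ℕ}

section LocalCounts

variable (f : BoundedAffinePerm k n)

lemma toFun_injective : Injective f.toFun := f.bijective.injective

lemma toFun_add_int_mul (m j : ℤ) : f.toFun (m + j * n) = f.toFun m + j * n := by
  have hper : Periodic (fun m => f.toFun m - m) n := fun m => by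
    simp only [f.periodic]; ring
  have : f.toFun (m + j * n) - (m + j * n) = f.toFun m - m := by simpa using hper.int_mul j m
  linarith

lemma modEq_of_toFun_modEq {p q : ℤ} (h : f.toFun p ≡ f.toFun q [ZMOD n]) :
    p ≡ q [ZMOD n] := by
  obtain ⟨j, hj⟩ := h.symm.dvd
  have : p = q + j * n := f.toFun_injective (by rw [f.toFun_add_int_mul]; linarith)
  rw [this]
  exact Int.add_mul_emod_self_right q j n

noncomputable def inversionsAt (p : ℤ) : ℕ := #{q ∈ Ioo p (p + n) | f.toFun q < f.toFun p}

noncomputable def crossingsAt (p : ℤ) : ℕ := #{q ∈ Ioo p (f.toFun p) | f.toFun p < f.toFun q}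

def fixedAt (p : ℤ) : ℕ := if f.toFun p = p then 1 else 0

lemma periodic_inversionsAt : Periodic f.inversionsAt n := fun p => by
  simp only [inversionsAt, ← map_add_right_Ioo, filter_map, card_map]
  simp [f.periodic]

lemma periodic_crossingsAt : Periodic f.crossingsAt n := fun p => by
  simp only [crossingsAt, f.periodic p, ← map_add_right_Ioo, filter_map, card_map]
  simp [f.periodic]

lemma periodic_fixedAt : Periodic f.fixedAt n := fun p => by
  simp [fixedAt, f.periodic]

lemma crossings_eq_sum_crossingsAt : f.crossings = ∑ p ∈ Icc (1 : ℤ) n, f.crossingsAt p := rfl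

lemma fixCount_eq_sum_fixedAt : f.fixCount = ∑ p ∈ Icc (1 : ℤ) n, f.fixedAt p :=
  card_filter _ _

/-- An inversion `(i, j)` with `f j < f i` is counted at `i`; one with `f i < f j - n` is
counted at `j` as the inversion `(j, i + n)`. -/
lemma length_eq_sum_inversionsAt : f.length = ∑ p ∈ Icc (1 : ℤ) n, f.inversionsAt p := by
  have hper : ∀ m : ℤ, f.toFun (m - n) = f.toFun m - n := fun m => by
    have := f.periodic (m - n); rw [sub_add_cancel] at this; omega
  unfold length inversionsAt
  rw [← card_sigma]
  refine card_bij'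
    (fun z _ => if f.toFun z.2 < f.toFun z.1 then (⟨z.1, z.2⟩ : (_ : ℤ) × ℤ) else ⟨z.2, z.1 + n⟩)
    (fun w _ => if w.2 ≤ (n : ℤ) then (w.1, w.2) else (w.2 - n, w.1)) ?_ ?_ ?_ ?_
  · rintro ⟨i, j⟩ hz
    simp only [mem_filter, mem_product, mem_Icc] at hz
    dsimp only
    split_ifs with hc
    · simp only [mem_sigma, mem_filter, mem_Ioo, mem_Icc]; omega
    · simp only [mem_sigma, mem_filter, mem_Ioo, mem_Icc, f.periodic]; omega
  · rintro ⟨p, q⟩ hw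
    simp only [mem_sigma, mem_filter, mem_Ioo, mem_Icc] at hw
    dsimp only
    split_ifs with hc
    · simp only [mem_filter, mem_product, mem_Icc]; omega
    · simp only [mem_filter, mem_product, mem_Icc, hper]; omega
  · rintro ⟨i, j⟩ hz
    simp only [mem_filter, mem_product, mem_Icc] at hz
    dsimp only
    split_ifs <;> simp_all
    omega
  · rintro ⟨p, q⟩ hw
    simp only [mem_sigma, mem_filter, mem_Ioo, mem_Icc] at hw
    dsimp only
    split_ifs <;> simp_all
    omega

lemma length_eq_zero_of_le_one (hn : n ≤ 1) : f.length = 0 := by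
  rw [length, card_eq_zero, filter_eq_empty_iff]
  rintro ⟨i, j⟩ hij
  simp only [mem_product, mem_Icc] at hij
  omega

end LocalCounts

def IsNewFixedPoint (f g : BoundedAffinePerm k n) : Prop :=
  g.crossings = f.crossings ∧ g.fixCount = f.fixCount + 1

def IsPinch (f g : BoundedAffinePerm k n) : Prop :=
  g.crossings + 1 = f.crossings ∧ g.fixCount = f.fixCount

def IsElementaryStep (f g : BoundedAffinePerm k n) : Prop :=
  g.length = f.length + 1 ∧ (IsNewFixedPoint f g ∨ IsPinch f g)

theorem isElementaryStep_of_local {f g : BoundedAffinePerm k n} {u v : ℤ} (huv : u < v)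
    (hvu : v < u + n)
    (happly : ∀ p, u < p → p < u + n → p ≠ v → g.toFun p = f.toFun p)
    (hinv : ∀ p, u < p → p < u + n → p ≠ v → g.inversionsAt p = f.inversionsAt p)
    (hcr : ∀ p, u < p → p < u + n → p ≠ v → g.crossingsAt p = f.crossingsAt p)
    (hinv_uv : g.inversionsAt u + g.inversionsAt v = f.inversionsAt u + f.inversionsAt v + 1)
    (hcr_uv : g.crossingsAt u + g.crossingsAt v + (if g.toFun v = v then 0 else 1) =
      f.crossingsAt u + f.crossingsAt v)
    (hfu : f.toFun u ≠ u) (hfv : f.toFun v ≠ v) (hgu : g.toFun u ≠ u) :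
    IsElementaryStep f g := by
  have L := sum_Icc_add_eq_of_eqOn_window g.periodic_inversionsAt f.periodic_inversionsAt
    huv hvu hinv
  have C := sum_Icc_add_eq_of_eqOn_window g.periodic_crossingsAt f.periodic_crossingsAt
    huv hvu hcr
  have F := sum_Icc_add_eq_of_eqOn_window g.periodic_fixedAt f.periodic_fixedAt huv hvu
    fun p h₁ h₂ hp => by simp only [fixedAt, happly p h₁ h₂ hp]
  rw [← length_eq_sum_inversionsAt, ← length_eq_sum_inversionsAt] at L
  rw [← crossings_eq_sum_crossingsAt, ← crossings_eq_sum_crossingsAt] at C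
  rw [← fixCount_eq_sum_fixedAt, ← fixCount_eq_sum_fixedAt] at F
  simp only [fixedAt, hfu, hfv, hgu, if_false] at F
  refine ⟨by omega, ?_⟩
  by_cases hv : g.toFun v = v
  · simp only [hv, if_true] at hcr_uv F
    exact .inl ⟨by omega, by omega⟩
  · simp only [hv, if_false] at hcr_uv F
    exact .inr ⟨by omega, by omega⟩

structure IsRightSwap (f g : BoundedAffinePerm k n) (a : ℤ) : Prop where
  two_le : 2 ≤ n
  apply_eq : ∀ m, g.toFun m = f.toFun (sigmaT n a m)
  apply_lt_apply_add_one : f.toFun a < f.toFun (a + 1)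

namespace IsRightSwap

variable {f g : BoundedAffinePerm k n} {a : ℤ}

lemma apply_self (h : IsRightSwap f g a) : g.toFun a = f.toFun (a + 1) := by
  rw [h.apply_eq, sigmaT_of_modEq (Int.ModEq.refl a)]

lemma apply_add_one (h : IsRightSwap f g a) : g.toFun (a + 1) = f.toFun a := by
  rw [h.apply_eq, sigmaT_of_modEq_add_one h.two_le (Int.ModEq.refl _), add_sub_cancel_right]

lemma apply_eq_swap (h : IsRightSwap f g a) {q : ℤ} (h₁ : a + 1 < q) (h₂ : q < a + 2 * n) :
    g.toFun q = f.toFun (Equiv.swap (a + n) (a + n + 1) q) := by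
  rw [h.apply_eq, sigmaT_eq_swap h.two_le Int.add_modEq_right (by omega) (by omega)]

lemma apply_of_lt (h : IsRightSwap f g a) {q : ℤ} (h₁ : a + 1 < q) (h₂ : q < a + n) :
    g.toFun q = f.toFun q := by
  rw [h.apply_eq_swap h₁ (by omega), Equiv.swap_apply_of_ne_of_ne (by omega) (by omega)]

lemma add_one_le_apply (h : IsRightSwap f g a) : a + 1 ≤ f.toFun a :=
  h.apply_add_one ▸ g.le_apply (a + 1)

lemma apply_add_one_le (h : IsRightSwap f g a) : f.toFun (a + 1) ≤ a + n := by
  have := g.apply_le a; rw [h.apply_self] at this; exact this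

lemma inversionsAt_self (h : IsRightSwap f g a) :
    g.inversionsAt a = f.inversionsAt (a + 1) + 1 := by
  have := h.two_le
  have e₁ : Ioo a (a + n) = insert (a + 1) (Ioo (a + 1) (a + n)) := by ext; simp; omega
  have e₂ : Ioo (a + 1) (a + 1 + n) = insert (a + n) (Ioo (a + 1) (a + n)) := by ext; simp; omega
  have hgt : ¬ f.toFun (a + n) < f.toFun (a + 1) := by
    rw [f.periodic]; have := h.add_one_le_apply; have := h.apply_add_one_le; omega
  have hlt : g.toFun (a + 1) < g.toFun a := by
    rw [h.apply_add_one, h.apply_self]; exact h.apply_lt_apply_add_one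
  have rest : {q ∈ Ioo (a + 1) (a + n) | g.toFun q < g.toFun a} =
      {q ∈ Ioo (a + 1) (a + n) | f.toFun q < f.toFun (a + 1)} := by
    refine filter_congr fun q hq => ?_
    rw [mem_Ioo] at hq
    rw [h.apply_self, h.apply_of_lt hq.1 hq.2]
  have hnot : a + 1 ∉ {q ∈ Ioo (a + 1) (a + n) | g.toFun q < g.toFun a} := by
    simp only [mem_filter, mem_Ioo]; omega
  rw [inversionsAt, inversionsAt, e₁, e₂, filter_insert, filter_insert, if_pos hlt, if_neg hgt,
    card_insert_of_notMem hnot, rest]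

lemma inversionsAt_add_one (h : IsRightSwap f g a) :
    g.inversionsAt (a + 1) = f.inversionsAt a := by
  have := h.two_le
  have e₁ : Ioo a (a + n) = insert (a + 1) (Ioo (a + 1) (a + n)) := by ext; simp; omega
  have e₂ : Ioo (a + 1) (a + 1 + n) = insert (a + n) (Ioo (a + 1) (a + n)) := by ext; simp; omega
  have hgt : ¬ g.toFun (a + n) < g.toFun (a + 1) := by
    rw [g.periodic, h.apply_self, h.apply_add_one]; have := h.apply_lt_apply_add_one; omega
  have hlt : ¬ f.toFun (a + 1) < f.toFun a := not_lt.mpr h.apply_lt_apply_add_one.le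
  have rest : {q ∈ Ioo (a + 1) (a + n) | g.toFun q < g.toFun (a + 1)} =
      {q ∈ Ioo (a + 1) (a + n) | f.toFun q < f.toFun a} := by
    refine filter_congr fun q hq => ?_
    rw [mem_Ioo] at hq
    rw [h.apply_add_one, h.apply_of_lt hq.1 hq.2]
  rw [inversionsAt, inversionsAt, e₁, e₂, filter_insert, filter_insert, if_neg hlt, if_neg hgt,
    rest]

lemma inversionsAt_of_lt (h : IsRightSwap f g a) {p : ℤ} (h₁ : a + 1 < p) (h₂ : p < a + n) :
    g.inversionsAt p = f.inversionsAt p := by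
  calc #{q ∈ Ioo p (p + n) | g.toFun q < g.toFun p}
      = #{q ∈ Ioo p (p + n) | f.toFun (Equiv.swap (a + n) (a + n + 1) q) < f.toFun p} := by
        refine congrArg card (filter_congr fun q hq => ?_)
        rw [mem_Ioo] at hq
        rw [h.apply_of_lt h₁ h₂, h.apply_eq_swap (by omega) (by omega)]
    _ = f.inversionsAt p := card_filter_swap (by simp only [mem_Ioo]; omega) (f.toFun · < f.toFun p)

lemma crossingsAt_self (h : IsRightSwap f g a) :
    g.crossingsAt a = f.crossingsAt (a + 1) := by
  have hfa := h.add_one_le_apply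
  have hlt := h.apply_lt_apply_add_one
  have e : Ioo a (f.toFun (a + 1)) = insert (a + 1) (Ioo (a + 1) (f.toFun (a + 1))) := by
    ext; simp; omega
  have hout : ¬ f.toFun (a + 1) < g.toFun (a + 1) := by rw [h.apply_add_one]; omega
  have rest : {q ∈ Ioo (a + 1) (f.toFun (a + 1)) | f.toFun (a + 1) < g.toFun q} =
      {q ∈ Ioo (a + 1) (f.toFun (a + 1)) | f.toFun (a + 1) < f.toFun q} := by
    refine filter_congr fun q hq => ?_
    rw [mem_Ioo] at hq
    rw [h.apply_of_lt hq.1 (by have := h.apply_add_one_le; omega)]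
  rw [crossingsAt, crossingsAt, h.apply_self, e, filter_insert, if_neg hout, rest]

lemma crossingsAt_add_one_add (h : IsRightSwap f g a) :
    g.crossingsAt (a + 1) + (if g.toFun (a + 1) = a + 1 then 0 else 1) = f.crossingsAt a := by
  have hfa := h.add_one_le_apply
  have hfa' : f.toFun a ≤ a + n := f.apply_le a
  rw [crossingsAt, crossingsAt, h.apply_add_one]
  by_cases hfix : f.toFun a = a + 1
  · have : Ioo a (a + 1) = ∅ := by ext; simp
    simp [hfix, this]
  have e : Ioo a (f.toFun a) = insert (a + 1) (Ioo (a + 1) (f.toFun a)) := by ext; simp; omega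
  have rest : {q ∈ Ioo (a + 1) (f.toFun a) | f.toFun a < g.toFun q} =
      {q ∈ Ioo (a + 1) (f.toFun a) | f.toFun a < f.toFun q} := by
    refine filter_congr fun q hq => ?_
    rw [mem_Ioo] at hq
    rw [h.apply_of_lt hq.1 (by omega)]
  have hnot : a + 1 ∉ {q ∈ Ioo (a + 1) (f.toFun a) | f.toFun a < f.toFun q} := by
    simp only [mem_filter, mem_Ioo]; omega
  rw [if_neg hfix, e, filter_insert, if_pos h.apply_lt_apply_add_one, rest,
    card_insert_of_notMem hnot]

/-- The only delicate position: when `f p = a + n + 1`, the interval `(p, f p)` separates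
`a + n` from `a + n + 1`; then both `f (a + n)` and `g (a + n)` exceed `f p`, for `f` because
`f a ≠ a + 1` by injectivity. -/
lemma crossingsAt_of_lt (h : IsRightSwap f g a) {p : ℤ} (h₁ : a + 1 < p) (h₂ : p < a + n) :
    g.crossingsAt p = f.crossingsAt p := by
  have hp := f.apply_le p
  rw [crossingsAt, crossingsAt, h.apply_of_lt h₁ h₂]
  by_cases hfp : f.toFun p = a + n + 1
  · have hfa : f.toFun a ≠ a + 1 := fun hfa => by
      have := f.toFun_injective (hfp.trans (by rw [f.periodic, hfa]; ring) :
        f.toFun p = f.toFun (a + n))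
      omega
    have := h.add_one_le_apply
    have := h.apply_lt_apply_add_one
    refine congrArg card (filter_congr fun q hq => ?_)
    rw [mem_Ioo] at hq
    rcases eq_or_ne q (a + n) with rfl | hq'
    · rw [g.periodic, f.periodic, h.apply_self]; omega
    · rw [h.apply_of_lt (by omega) (by omega)]
  · calc #{q ∈ Ioo p (f.toFun p) | f.toFun p < g.toFun q}
        = #{q ∈ Ioo p (f.toFun p) | f.toFun p < f.toFun (Equiv.swap (a + n) (a + n + 1) q)} := by
          refine congrArg card (filter_congr fun q hq => ?_)
          rw [mem_Ioo] at hq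
          rw [h.apply_eq_swap (by omega) (by omega)]
      _ = _ := card_filter_swap (by simp only [mem_Ioo]; omega) (f.toFun p < f.toFun ·)

theorem isElementaryStep (h : IsRightSwap f g a) : IsElementaryStep f g := by
  have := h.two_le
  have hfa := h.add_one_le_apply
  have hlt := h.apply_lt_apply_add_one
  refine isElementaryStep_of_local (u := a) (v := a + 1) (by omega) (by omega)
    (fun p h₁ h₂ hp => h.apply_of_lt (by omega) h₂)
    (fun p h₁ h₂ hp => h.inversionsAt_of_lt (by omega) h₂)
    (fun p h₁ h₂ hp => h.crossingsAt_of_lt (by omega) h₂) ?_ ?_ (by omega) (by omega)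
    (by rw [h.apply_self]; omega)
  · rw [h.inversionsAt_self, h.inversionsAt_add_one]; ring
  · rw [h.crossingsAt_self, ← h.crossingsAt_add_one_add]; ring

end IsRightSwap

structure IsLeftSwap (f g : BoundedAffinePerm k n) (a x y : ℤ) : Prop where
  two_le : 2 ≤ n
  apply_left : f.toFun x = a
  apply_right : f.toFun y = a + 1
  left_lt_right : x < y
  apply_eq : ∀ m, g.toFun m = sigmaT n a (f.toFun m)

namespace IsLeftSwap

variable {f g : BoundedAffinePerm k n} {a x y : ℤ}

lemma swapped_apply_left (h : IsLeftSwap f g a x y) : g.toFun x = a + 1 := by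
  rw [h.apply_eq, h.apply_left, sigmaT_of_modEq (Int.ModEq.refl a)]

lemma swapped_apply_right (h : IsLeftSwap f g a x y) : g.toFun y = a := by
  rw [h.apply_eq, h.apply_right, sigmaT_of_modEq_add_one h.two_le (Int.ModEq.refl _),
    add_sub_cancel_right]

lemma right_le (h : IsLeftSwap f g a x y) : y ≤ a := h.swapped_apply_right ▸ g.le_apply y

lemma lt_left_add (h : IsLeftSwap f g a x y) : a < x + n := by
  have := g.apply_le x; rw [h.swapped_apply_left] at this; omega

lemma apply_ne_left (h : IsLeftSwap f g a x y) {q : ℤ} (hq : q ≠ x) : f.toFun q ≠ a :=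
  fun hfq => hq (f.toFun_injective (hfq.trans h.apply_left.symm))

lemma apply_ne_right (h : IsLeftSwap f g a x y) {q : ℤ} (hq : q ≠ y) : f.toFun q ≠ a + 1 :=
  fun hfq => hq (f.toFun_injective (hfq.trans h.apply_right.symm))

lemma apply_of_ne (h : IsLeftSwap f g a x y) {q : ℤ} (h₁ : y - n < q) (h₂ : q < y + n)
    (hx : q ≠ x) (hxn : q ≠ x + n) (hy : q ≠ y) : g.toFun q = f.toFun q := by
  have := h.left_lt_right
  have := h.right_le
  have := h.lt_left_add
  rw [h.apply_eq, sigmaT_of_not_modEq]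
  · intro hq
    rw [← h.apply_left] at hq
    have := Int.eq_or_eq_add_of_modEq (f.modEq_of_toFun_modEq hq) (by omega) (by omega)
    omega
  · intro hq
    rw [← h.apply_right] at hq
    exact hy (Int.eq_of_modEq_of_lt_of_lt (f.modEq_of_toFun_modEq hq) h₁ h₂)

/-- `σ_a` moves values by at most one, so it cannot change a comparison with a value outside
the class of `a + 1`. -/
lemma apply_lt_iff (h : IsLeftSwap f g a x y) {p q : ℤ} (hp : ¬ f.toFun p ≡ a + 1 [ZMOD n])
    (hpq : q ≠ p) : g.toFun q < f.toFun p ↔ f.toFun q < f.toFun p := by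
  have hne : f.toFun q ≠ f.toFun p := fun e => hpq (f.toFun_injective e)
  rw [h.apply_eq]
  by_cases h₁ : f.toFun q ≡ a [ZMOD n]
  · rw [sigmaT_of_modEq h₁]
    have : f.toFun p ≠ f.toFun q + 1 := fun e => hp (e ▸ h₁.add_right 1)
    omega
  by_cases h₂ : f.toFun q ≡ a + 1 [ZMOD n]
  · rw [sigmaT_of_modEq_add_one h.two_le h₂]; omega
  · rw [sigmaT_of_not_modEq h₁ h₂]

lemma lt_apply_iff (h : IsLeftSwap f g a x y) {p q : ℤ} (hp : ¬ f.toFun p ≡ a [ZMOD n])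
    (hpq : q ≠ p) : f.toFun p < g.toFun q ↔ f.toFun p < f.toFun q := by
  have hne : f.toFun q ≠ f.toFun p := fun e => hpq (f.toFun_injective e)
  rw [h.apply_eq]
  by_cases h₁ : f.toFun q ≡ a [ZMOD n]
  · rw [sigmaT_of_modEq h₁]; omega
  by_cases h₂ : f.toFun q ≡ a + 1 [ZMOD n]
  · rw [sigmaT_of_modEq_add_one h.two_le h₂]
    have : f.toFun q ≠ f.toFun p + 1 := fun e => hp <| by
      have := (e ▸ h₂).add_right (-1)
      rwa [add_neg_cancel_right, add_neg_cancel_right] at this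
    omega
  · rw [sigmaT_of_not_modEq h₁ h₂]

lemma inversionsAt_left (h : IsLeftSwap f g a x y) :
    g.inversionsAt x = f.inversionsAt x + 1 := by
  have := h.left_lt_right
  have := h.right_le
  have := h.lt_left_add
  have hy : y ∈ Ioo x (x + n) := by rw [mem_Ioo]; omega
  have hg : g.toFun y < g.toFun x := by rw [h.swapped_apply_right, h.swapped_apply_left]; omega
  have hf : ¬ f.toFun y < f.toFun x := by rw [h.apply_right, h.apply_left]; omega
  have rest : {q ∈ (Ioo x (x + n)).erase y | g.toFun q < g.toFun x} =
      {q ∈ (Ioo x (x + n)).erase y | f.toFun q < f.toFun x} := by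
    refine filter_congr fun q hq => ?_
    rw [mem_erase, mem_Ioo] at hq
    have := h.apply_ne_left (q := q) (by omega)
    rw [h.swapped_apply_left, h.apply_left,
      h.apply_of_ne (by omega) (by omega) (by omega) (by omega) hq.1]
    omega
  have hnot : y ∉ {q ∈ (Ioo x (x + n)).erase y | f.toFun q < f.toFun x} := by simp
  rw [inversionsAt, inversionsAt, ← insert_erase hy, filter_insert, filter_insert, if_pos hg,
    if_neg hf, rest, card_insert_of_notMem hnot]

lemma inversionsAt_right (h : IsLeftSwap f g a x y) :
    g.inversionsAt y = f.inversionsAt y := by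
  have := h.left_lt_right
  have := h.right_le
  have := h.lt_left_add
  rw [inversionsAt, inversionsAt, h.swapped_apply_right, h.apply_right]
  refine congrArg card (filter_congr fun q hq => ?_)
  rw [mem_Ioo] at hq
  rcases eq_or_ne q (x + n) with rfl | hq'
  · rw [g.periodic, f.periodic, h.swapped_apply_left, h.apply_left]; omega
  · have := h.apply_ne_left (q := q) (by omega)
    rw [h.apply_of_ne (by omega) hq.2 (by omega) hq' (by omega)]
    omega

lemma inversionsAt_of_ne (h : IsLeftSwap f g a x y) {p : ℤ} (h₁ : x < p) (h₂ : p < x + n)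
    (hp : p ≠ y) : g.inversionsAt p = f.inversionsAt p := by
  have := h.left_lt_right
  have := h.right_le
  have := h.lt_left_add
  have hp' : ¬ f.toFun p ≡ a + 1 [ZMOD n] := fun e => hp <|
    Int.eq_of_modEq_of_lt_of_lt (f.modEq_of_toFun_modEq (h.apply_right ▸ e)) (by omega) (by omega)
  rw [inversionsAt, inversionsAt, h.apply_of_ne (by omega) (by omega) (by omega) (by omega) hp]
  exact congrArg card (filter_congr fun q hq => h.apply_lt_iff hp' (by rw [mem_Ioo] at hq; omega))

lemma crossingsAt_of_ne (h : IsLeftSwap f g a x y) {p : ℤ} (h₁ : x < p) (h₂ : p < x + n)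
    (hp : p ≠ y) : g.crossingsAt p = f.crossingsAt p := by
  have := h.left_lt_right
  have := h.right_le
  have := h.lt_left_add
  have hp' : ¬ f.toFun p ≡ a [ZMOD n] := fun e =>
    Int.not_modEq_of_lt_of_lt h₁ h₂ (f.modEq_of_toFun_modEq (h.apply_left ▸ e))
  rw [crossingsAt, crossingsAt, h.apply_of_ne (by omega) (by omega) (by omega) (by omega) hp]
  exact congrArg card (filter_congr fun q hq => h.lt_apply_iff hp' (by rw [mem_Ioo] at hq; omega))

/-- Positions in `(x, a)` other than `y` count alike for `f` and `g`; when `y < a`, the extra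
position `y` counted for `f` is balanced by the position `a` counted for `g`. -/
lemma crossingsAt_left (h : IsLeftSwap f g a x y) : g.crossingsAt x = f.crossingsAt x := by
  have := h.left_lt_right
  have := h.right_le
  have := h.lt_left_add
  have rest : ∀ s ⊆ Ioo x a, y ∉ s →
      {q ∈ s | a + 1 < g.toFun q} = {q ∈ s | a < f.toFun q} := fun s hs hys =>
    filter_congr fun q hq => by
      have hq' := mem_Ioo.mp (hs hq)
      have := h.apply_ne_right (q := q) (by rintro rfl; exact hys hq)
      rw [h.apply_of_ne (by omega) (by omega) (by omega) (by omega) (by rintro rfl; exact hys hq)]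
      omega
  have e : Ioo x (a + 1) = insert a (Ioo x a) := by ext; simp; omega
  rw [crossingsAt, crossingsAt, h.swapped_apply_left, h.apply_left, e, filter_insert]
  rcases h.right_le.eq_or_lt with rfl | hya
  · rw [if_neg (by rw [h.swapped_apply_right]; omega), rest _ subset_rfl (by simp)]
  have hfa : a + 1 < f.toFun a := by
    have := f.le_apply a
    have := h.apply_ne_left (q := a) (by omega)
    have := h.apply_ne_right (q := a) (by omega)
    omega
  have hy : y ∈ Ioo x a := by rw [mem_Ioo]; omega
  have hgy : ¬ a + 1 < g.toFun y := by rw [h.swapped_apply_right]; omega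
  have hfy : a < f.toFun y := by rw [h.apply_right]; omega
  rw [if_pos (by rwa [h.apply_of_ne (by omega) (by omega) (by omega) (by omega) (by omega)]),
    card_insert_of_notMem (by simp), ← insert_erase hy, filter_insert, filter_insert, if_neg hgy,
    if_pos hfy, card_insert_of_notMem (by simp), rest _ (erase_subset _ _) (by simp)]

lemma crossingsAt_right_add (h : IsLeftSwap f g a x y) :
    g.crossingsAt y + (if g.toFun y = y then 0 else 1) = f.crossingsAt y := by
  have := h.left_lt_right
  have := h.lt_left_add
  rw [crossingsAt, crossingsAt, h.swapped_apply_right, h.apply_right]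
  rcases h.right_le.eq_or_lt with rfl | hya
  · have : Ioo y (y + 1) = ∅ := by ext; simp
    simp [this]
  have hfa : a + 1 < f.toFun a := by
    have := f.le_apply a
    have := h.apply_ne_left (q := a) (by omega)
    have := h.apply_ne_right (q := a) (by omega)
    omega
  have e : Ioo y (a + 1) = insert a (Ioo y a) := by ext; simp; omega
  have rest : {q ∈ Ioo y a | a < g.toFun q} = {q ∈ Ioo y a | a + 1 < f.toFun q} := by
    refine filter_congr fun q hq => ?_
    rw [mem_Ioo] at hq
    have := h.apply_ne_left (q := q) (by omega)
    have := h.apply_ne_right (q := q) (by omega)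
    rw [h.apply_of_ne (by omega) (by omega) (by omega) (by omega) (by omega)]
    omega
  rw [if_neg (by omega), e, filter_insert, if_pos hfa, card_insert_of_notMem (by simp), rest]

theorem isElementaryStep (h : IsLeftSwap f g a x y) : IsElementaryStep f g := by
  have := h.left_lt_right
  have := h.right_le
  have := h.lt_left_add
  refine isElementaryStep_of_local h.left_lt_right (by omega)
    (fun p h₁ h₂ hp => h.apply_of_ne (by omega) (by omega) (by omega) (by omega) hp)
    (fun p h₁ h₂ hp => h.inversionsAt_of_ne h₁ h₂ hp)
    (fun p h₁ h₂ hp => h.crossingsAt_of_ne h₁ h₂ hp) ?_ ?_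
    (by rw [h.apply_left]; omega) (by rw [h.apply_right]; omega)
    (by rw [h.swapped_apply_left]; omega)
  · rw [h.inversionsAt_left, h.inversionsAt_right]; ring
  · rw [h.crossingsAt_left, ← h.crossingsAt_right_add]; ring

end IsLeftSwap

section Covers

variable {f g : BoundedAffinePerm k n}

lemma isElementaryStep_or_of_sigmaT_comp (hn : 2 ≤ n) {i : ℤ}
    (hg : ∀ m, g.toFun m = sigmaT n i (f.toFun m)) :
    IsElementaryStep f g ∨ IsElementaryStep g f := by
  obtain ⟨x, hx⟩ := f.bijective.surjective i
  obtain ⟨y, hy⟩ := f.bijective.surjective (i + 1)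
  rcases lt_or_gt_of_ne (show x ≠ y by rintro rfl; omega) with hxy | hyx
  · exact .inl (IsLeftSwap.isElementaryStep ⟨hn, hx, hy, hxy, hg⟩)
  · refine .inr (IsLeftSwap.isElementaryStep
      ⟨hn, ?_, ?_, hyx, fun m => by rw [hg, sigmaT_sigmaT hn]⟩)
    · rw [hg, hy, sigmaT_of_modEq_add_one hn (.refl _), add_sub_cancel_right]
    · rw [hg, hx, sigmaT_of_modEq (.refl _)]

lemma isElementaryStep_or_of_comp_sigmaT (hn : 2 ≤ n) {i : ℤ}
    (hg : ∀ m, g.toFun m = f.toFun (sigmaT n i m)) :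
    IsElementaryStep f g ∨ IsElementaryStep g f := by
  rcases lt_or_gt_of_ne (fun e => by have := f.toFun_injective e; omega :
    f.toFun i ≠ f.toFun (i + 1)) with hlt | hgt
  · exact .inl (IsRightSwap.isElementaryStep ⟨hn, hg, hlt⟩)
  · refine .inr (IsRightSwap.isElementaryStep ⟨hn, fun m => by rw [hg, sigmaT_sigmaT hn], ?_⟩)
    rwa [hg, hg, sigmaT_of_modEq (.refl _), sigmaT_of_modEq_add_one hn (.refl _),
      add_sub_cancel_right]

theorem Covers.isElementaryStep (h : f.Covers g) : IsElementaryStep f g := by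
  obtain ⟨hlen, i, hi⟩ := h
  have hn : 2 ≤ n := by
    by_contra hn
    rw [f.length_eq_zero_of_le_one (by omega), g.length_eq_zero_of_le_one (by omega)] at hlen
    exact lt_irrefl 0 hlen
  have key := hi.elim (fun e => isElementaryStep_or_of_sigmaT_comp hn (congrFun e))
    (fun e => isElementaryStep_or_of_comp_sigmaT hn (congrFun e))
  exact key.resolve_right fun h' => by have := h'.1; omega

namespace IsElementaryStep

lemma length_sub (h : IsElementaryStep f g) : (g.length : ℤ) - f.length = 1 := by
  have := h.1; omega

lemma fixCount_sub (h : IsElementaryStep f g) :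
    (g.fixCount : ℤ) - f.fixCount = if f.crossings = g.crossings then 1 else 0 := by
  rcases h.2 with ⟨hc, hf⟩ | ⟨hc, hf⟩
  · rw [if_pos hc.symm]; omega
  · rw [if_neg (by omega)]; omega

lemma crossings_sub (h : IsElementaryStep f g) :
    (f.crossings : ℤ) - g.crossings = 1 - if f.crossings = g.crossings then 1 else 0 := by
  rcases h.2 with ⟨hc, hf⟩ | ⟨hc, hf⟩
  · rw [if_pos hc.symm]; omega
  · rw [if_neg (by omega)]; omega

end IsElementaryStep

end Covers

end BoundedAffinePerm

theorem statement8 {k n : ℕ} (t : ℕ) (F : ℕ → BoundedAffinePerm k n)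
    (hchain : ∀ s : ℕ, s < t → (F s).Covers (F (s + 1))) :
    (t : ℤ) = ((F t).length : ℤ) - ((F 0).length : ℤ) ∧
    ((F 0).crossings : ℤ) - ((F t).crossings : ℤ) =
      (((F t).length : ℤ) - ((F 0).length : ℤ)) -
        (((F t).fixCount : ℤ) - ((F 0).fixCount : ℤ)) ∧
    ((((Finset.range t).filter
        (fun s => (F s).crossings = (F (s + 1)).crossings)).card : ℤ) =
      ((F t).fixCount : ℤ) - ((F 0).fixCount : ℤ)) := by
  have step : ∀ s ∈ range t, (F s).IsElementaryStep (F (s + 1)) := fun s hs =>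
    (hchain s (mem_range.mp hs)).isElementaryStep
  have hlen := sum_range_sub (fun s => ((F s).length : ℤ)) t
  have hfix := sum_range_sub (fun s => ((F s).fixCount : ℤ)) t
  have hcr := sum_range_sub' (fun s => ((F s).crossings : ℤ)) t
  rw [sum_congr rfl fun s hs => (step s hs).length_sub] at hlen
  rw [sum_congr rfl fun s hs => (step s hs).fixCount_sub] at hfix
  rw [sum_congr rfl fun s hs => (step s hs).crossings_sub, sum_sub_distrib] at hcr
  have hcard : ((#{s ∈ range t | (F s).crossings = (F (s + 1)).crossings} : ℕ) : ℤ) =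
      ∑ s ∈ range t, if (F s).crossings = (F (s + 1)).crossings then 1 else 0 := by
    rw [card_filter]; push_cast; rfl
  simp only [sum_const, card_range, nsmul_eq_mul, mul_one] at hlen hcr
  exact ⟨hlen, by linarith, by linarith⟩
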